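/- Let R = Z/2[t] be the graded polynomial ring with |t| = 1. Let M be a finitely generated free graded R-module with homogeneous R-basis {α_1,…,α_m}, let N be another finitely generated free graded R-module, and let φ: M → N be a degree-q graded R-module map such that φ: M^g → N^{g+q} is an isomorphism for all g ≥ g_0, for some integer g_0. Then N has a homogeneous R-basis {β_1,…,β_m} such that |β_i| ≤ |α_i| + q for all i = 1,…,m. -/

import Mathlib

/-!
## Statement 18: homogeneous bases and maps of graded `ℤ/2[t]`-modules

We encode a graded module over the graded polynomial ring `R = ℤ/2[t]` (`|t| = 1`)
as a family `M : ℤ → Type` of `ℤ/2`-vector spaces together with a degree-one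
additive operator `t`.  A homogeneous `R`-basis `{α₁, …, α_m}` with `αᵢ` of degree
`dᵢ` is encoded by the requirement that in every degree `g` the elements
`t^{g-dᵢ}·αᵢ` (for the `i` with `dᵢ ≤ g`) form a `ℤ/2`-basis of `M^g`, i.e. that
the corresponding evaluation map from coefficient tuples is bijective.
-/

noncomputable section

/-- Transport along an equality of degrees. -/
def Gcast (M : ℤ → Type) [∀ g, AddCommGroup (M g)] {g g' : ℤ} (h : g = g')
    (x : M g) : M g' := by subst h; exact x

/-- Iterated application of the degree-one operator `t`. -/
def tPow (M : ℤ → Type) [∀ g, AddCommGroup (M g)] (t : ∀ g : ℤ, M g →+ M (g + 1))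
    {g : ℤ} : (k : ℕ) → M g → M (g + k)
  | 0, x => Gcast M (by omega) x
  | k + 1, x => Gcast M (by omega) (t (g + k) (tPow M t k x))

/-- `{α₁, …, α_m}`, with `αᵢ` homogeneous of degree `d i`, is a homogeneous
`ℤ/2[t]`-basis of the graded module `(M, t)`: in each degree `g` the map
`(cᵢ)ᵢ ↦ Σᵢ cᵢ · t^{g - dᵢ} αᵢ` (over the `i` with `dᵢ ≤ g`) is bijective. -/
def IsHomogeneousBasis (M : ℤ → Type) [∀ g, AddCommGroup (M g)]
    [∀ g, Module (ZMod 2) (M g)] (t : ∀ g : ℤ, M g →+ M (g + 1))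
    {m : ℕ} (d : Fin m → ℤ) (α : ∀ i, M (d i)) : Prop :=
  ∀ g : ℤ, Function.Bijective
    (fun c : {i : Fin m // d i ≤ g} → ZMod 2 =>
      ∑ i : {i : Fin m // d i ≤ g},
        c i • Gcast M (show d i.1 + ((g - d i.1).toNat : ℤ) = g by have := i.2; omega)
          (tPow M t (g - d i.1).toNat (α i.1)))

/-!
In each degree `g` the vectors `t^{g - dᵢ} αᵢ` form a basis of `M^g`; since `t` carries this
basis into the basis of `M^{g+1}`, it is injective, and hence so is every `φ_g`: push `x` up
by `t^k` into the degrees where `φ` is bijective. Comparing dimensions gives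
`#{i | dᵢ ≤ g} ≤ #{j | d'ⱼ ≤ g + q}` for every `g`, with equality for large `g`, so a basis `β'`
of `N` also has `m` elements. Matching the two degree lists after sorting them yields a
permutation `σ` with `d'_{σ i} ≤ dᵢ + q`, and `β' ∘ σ` is the required basis.
-/

section Transport

variable {M N : ℤ → Type} [∀ g, AddCommGroup (M g)] [∀ g, AddCommGroup (N g)]

lemma Gcast_Gcast {g g' g'' : ℤ} (h : g = g') (h' : g' = g'') (x : M g) :
    Gcast M h' (Gcast M h x) = Gcast M (h.trans h') x := by
  subst h h'; rfl

lemma map_Gcast {q : ℤ} (f : ∀ g : ℤ, M g →+ N (g + q)) {g g' : ℤ} (h : g = g')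
    (x : M g) :
    f g' (Gcast M h x) = Gcast N (congrArg (· + q) h) (f g x) := by
  subst h; rfl

lemma map_Gcast_tPow (t : ∀ g : ℤ, M g →+ M (g + 1)) {a g : ℤ} {k k' : ℕ}
    (hk : k' = k + 1) (h : a + k = g) (h' : a + k' = g + 1) (x : M a) :
    t g (Gcast M h (tPow M t k x)) = Gcast M h' (tPow M t k' x) := by
  subst hk; simp only [tPow, map_Gcast t, Gcast_Gcast]

lemma tPow_injective (t : ∀ g : ℤ, M g →+ M (g + 1)) (ht : ∀ g, Function.Injective (t g))
    {g : ℤ} (k : ℕ) : Function.Injective (tPow M t k : M g → M (g + k)) := by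
  induction k with
  | zero => intro x y hxy; simpa [tPow, Gcast] using hxy
  | succ k ih => intro x y hxy; exact ih (ht _ (by simpa [tPow, Gcast] using hxy))

variable {tM : ∀ g : ℤ, M g →+ M (g + 1)} {tN : ∀ g : ℤ, N g →+ N (g + 1)}
  {q : ℤ} {φ : ∀ g : ℤ, M g →+ N (g + q)}

lemma map_tPow
    (hφ : ∀ (g : ℤ) (x : M g),
      φ (g + 1) (tM g x) = Gcast N (add_right_comm g q 1) (tN (g + q) (φ g x)))
    {g : ℤ} (k : ℕ) (x : M g) :
    φ (g + k) (tPow M tM k x) = Gcast N (by omega) (tPow N tN k (φ g x)) := by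
  induction k with
  | zero => simp only [tPow, map_Gcast, Gcast_Gcast]
  | succ k ih => simp only [tPow, map_Gcast, hφ, ih, map_Gcast tN, Gcast_Gcast]

lemma injective_of_forall_le_injective (htM : ∀ g, Function.Injective (tM g))
    (hφ : ∀ (g : ℤ) (x : M g),
      φ (g + 1) (tM g x) = Gcast N (add_right_comm g q 1) (tN (g + q) (φ g x)))
    {g₀ : ℤ} (hinj : ∀ g, g₀ ≤ g → Function.Injective (φ g)) (g : ℤ) :
    Function.Injective (φ g) := by
  intro x y hxy
  set k := (g₀ - g).toNat
  refine tPow_injective tM htM k (hinj (g + k) (by omega) ?_)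
  rw [map_tPow hφ, map_tPow hφ, hxy]

end Transport

section HomogeneousFamily

variable {M : ℤ → Type} [∀ g, AddCommGroup (M g)]
  (t : ∀ g : ℤ, M g →+ M (g + 1)) {m : ℕ} (d : Fin m → ℤ) (α : ∀ i, M (d i))

def homogeneousFamily (g : ℤ) (i : {i : Fin m // d i ≤ g}) : M g :=
  Gcast M (show d i.1 + ((g - d i.1).toNat : ℤ) = g by have := i.2; omega)
    (tPow M t (g - d i.1).toNat (α i.1))

variable {t d α}

lemma t_homogeneousFamily {g : ℤ} (i : {i : Fin m // d i ≤ g}) :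
    t g (homogeneousFamily t d α g i) =
      homogeneousFamily t d α (g + 1) ⟨i.1, Int.le_add_one i.2⟩ :=
  map_Gcast_tPow t (by have := i.2; dsimp only; omega) _ _ _

variable [∀ g, Module (ZMod 2) (M g)]

lemma isHomogeneousBasis_iff_linearIndependent_and_span :
    IsHomogeneousBasis M t d α ↔
      ∀ g, LinearIndependent (ZMod 2) (homogeneousFamily t d α g) ∧
        Submodule.span (ZMod 2) (Set.range (homogeneousFamily t d α g)) = ⊤ := by
  refine forall_congr' fun g => ?_
  rw [linearIndependent_iff_injective_fintypeLinearCombination,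
    ← Fintype.range_linearCombination, LinearMap.range_eq_top]
  rfl

namespace IsHomogeneousBasis

variable (hM : IsHomogeneousBasis M t d α)
include hM

def basis (g : ℤ) : Module.Basis {i : Fin m // d i ≤ g} (ZMod 2) (M g) :=
  Module.Basis.mk (isHomogeneousBasis_iff_linearIndependent_and_span.1 hM g).1
    (isHomogeneousBasis_iff_linearIndependent_and_span.1 hM g).2.ge

lemma coe_basis (g : ℤ) : ⇑(hM.basis g) = homogeneousFamily t d α g :=
  Module.Basis.coe_mk _ _

lemma finrank_eq (g : ℤ) :
    Module.finrank (ZMod 2) (M g) = Fintype.card {i : Fin m // d i ≤ g} :=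
  Module.finrank_eq_card_basis (hM.basis g)

lemma eventually_finrank_eq : ∀ᶠ g in Filter.atTop, Module.finrank (ZMod 2) (M g) = m := by
  obtain ⟨G, hG⟩ := Finite.exists_le d
  filter_upwards [Filter.eventually_ge_atTop G] with g hg
  rw [hM.finrank_eq, Fintype.card_congr (Equiv.subtypeUnivEquiv fun i => (hG i).trans hg),
    Fintype.card_fin]

lemma card_le_card_of_injective {N : ℤ → Type} [∀ g, AddCommGroup (N g)]
    [∀ g, Module (ZMod 2) (N g)] {tN : ∀ g : ℤ, N g →+ N (g + 1)} {n : ℕ}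
    {e : Fin n → ℤ} {β : ∀ i, N (e i)} (hN : IsHomogeneousBasis N tN e β) {g g' : ℤ}
    (f : M g →+ N g') (hf : Function.Injective f) :
    Fintype.card {i : Fin m // d i ≤ g} ≤ Fintype.card {i : Fin n // e i ≤ g'} := by
  have := (hN.basis g').finiteDimensional_of_finite
  rw [← hM.finrank_eq, ← hN.finrank_eq]
  exact LinearMap.finrank_le_finrank_of_injective (f := f.toZModLinearMap 2) hf

lemma t_injective (g : ℤ) : Function.Injective (t g) := by
  have hli : LinearIndependent (ZMod 2) ((t g).toZModLinearMap 2 ∘ hM.basis g) := by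
    convert (hM.basis (g + 1)).linearIndependent.comp _
      (Subtype.impEmbedding _ _ fun _ => Int.le_add_one).injective using 1
    funext i
    simp only [Function.comp_apply, coe_basis, AddMonoidHom.coe_toZModLinearMap,
      t_homogeneousFamily]
    rfl
  exact LinearMap.injective_of_linearIndependent (hM.basis g).span_eq hli

lemma reindex {n : ℕ} (σ : Fin n ≃ Fin m) :
    IsHomogeneousBasis M t (d ∘ σ) (fun i => α (σ i)) := by
  refine isHomogeneousBasis_iff_linearIndependent_and_span.2 fun g => ?_
  obtain ⟨hli, hsp⟩ := isHomogeneousBasis_iff_linearIndependent_and_span.1 hM g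
  have hfam : homogeneousFamily t (d ∘ σ) (fun i => α (σ i)) g =
      homogeneousFamily t d α g ∘ σ.subtypeEquiv fun _ => Iff.rfl := rfl
  rw [hfam, linearIndependent_equiv, EquivLike.range_comp]
  exact ⟨hli, hsp⟩

end IsHomogeneousBasis

end HomogeneousFamily

section SortedCount

variable {α : Type*} [LinearOrder α] {m : ℕ} {f : Fin m → α}

lemma Monotone.lt_card_le_apply (hf : Monotone f) (j : Fin m) :
    (j : ℕ) < Fintype.card {k // f k ≤ f j} := by
  rw [Fintype.card_subtype]
  calc (j : ℕ) < (Finset.Iic j).card := by simp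
    _ ≤ _ := Finset.card_le_card fun k hk => by simpa using hf (Finset.mem_Iic.1 hk)

lemma Monotone.card_le_of_lt_apply (hf : Monotone f) {j : Fin m} {g : α} (hg : g < f j) :
    Fintype.card {k // f k ≤ g} ≤ j := by
  rw [Fintype.card_subtype, ← Fin.card_Iio j]
  refine Finset.card_le_card fun k hk => Finset.mem_Iio.2 (lt_of_not_ge fun hjk => ?_)
  simp only [Finset.mem_filter, Finset.mem_univ, true_and] at hk
  exact (hg.trans_le (hf hjk)).not_ge hk

lemma exists_perm_le_of_card_le (a b : Fin m → α)
    (h : ∀ g, Fintype.card {i // a i ≤ g} ≤ Fintype.card {i // b i ≤ g}) :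
    ∃ σ : Equiv.Perm (Fin m), ∀ i, b (σ i) ≤ a i := by
  have card_sort (f : Fin m → α) (g : α) :
      Fintype.card {k // (f ∘ Tuple.sort f) k ≤ g} = Fintype.card {i // f i ≤ g} :=
    Fintype.card_congr ((Tuple.sort f).subtypeEquiv fun _ => Iff.rfl)
  have hsorted (j : Fin m) : b (Tuple.sort b j) ≤ a (Tuple.sort a j) := by
    by_contra! hlt
    have ha := (Tuple.monotone_sort a).lt_card_le_apply j
    have hb := (Tuple.monotone_sort b).card_le_of_lt_apply hlt
    rw [card_sort] at ha hb
    exact (ha.trans_le (h _)).not_ge hb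
  exact ⟨(Tuple.sort a).symm.trans (Tuple.sort b), fun i => by
    simpa using hsorted ((Tuple.sort a).symm i)⟩

end SortedCount

/-- Let `R = ℤ/2[t]` with `|t| = 1`, let `M` be a finitely
generated free graded `R`-module with homogeneous basis `{α₁, …, α_m}` (of degrees
`d i`), let `N` be another finitely generated free graded `R`-module, and let
`φ : M → N` be a degree-`q` map of graded `R`-modules which is an isomorphism
`M^g → N^{g+q}` for all `g ≥ g₀`.  Then `N` has a homogeneous basis
`{β₁, …, β_m}` with `deg βᵢ ≤ deg αᵢ + q` for all `i`. -/
theorem graded_module_basis_bound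
    (M N : ℤ → Type) [∀ g, AddCommGroup (M g)] [∀ g, Module (ZMod 2) (M g)]
    [∀ g, AddCommGroup (N g)] [∀ g, Module (ZMod 2) (N g)]
    (tM : ∀ g : ℤ, M g →+ M (g + 1)) (tN : ∀ g : ℤ, N g →+ N (g + 1))
    -- `M` is free with homogeneous basis `α`
    (m : ℕ) (d : Fin m → ℤ) (α : ∀ i, M (d i))
    (hM : IsHomogeneousBasis M tM d α)
    -- `N` is finitely generated free graded
    (hN : ∃ (m' : ℕ) (d' : Fin m' → ℤ) (β' : ∀ i, N (d' i)),
      IsHomogeneousBasis N tN d' β')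
    -- `φ` is a degree-`q` map of graded `R`-modules
    (q : ℤ) (φ : ∀ g : ℤ, M g →+ N (g + q))
    (hφ : ∀ (g : ℤ) (x : M g), φ (g + 1) (tM g x) = Gcast N (by omega) (tN (g + q) (φ g x)))
    -- which is an isomorphism in all degrees `g ≥ g₀`
    (g₀ : ℤ) (hiso : ∀ g : ℤ, g₀ ≤ g → Function.Bijective (φ g)) :
    ∃ (e : Fin m → ℤ) (β : ∀ i, N (e i)),
      IsHomogeneousBasis N tN e β ∧ ∀ i, e i ≤ d i + q := by
  obtain ⟨m', d', β', hN⟩ := hN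
  have hm : m' = m := by
    have hNq := (Filter.tendsto_atTop_add_const_right _ q Filter.tendsto_id).eventually
      hN.eventually_finrank_eq
    obtain ⟨g, hgM, hgN, hg₀⟩ :=
      (hM.eventually_finrank_eq.and (hNq.and (Filter.eventually_ge_atTop g₀))).exists
    rw [← hgM, ← hgN]
    exact (LinearEquiv.ofBijective ((φ g).toZModLinearMap 2) (hiso g hg₀)).finrank_eq.symm
  subst hm
  have hφinj := injective_of_forall_le_injective hM.t_injective hφ fun g hg => (hiso g hg).1
  obtain ⟨σ, hσ⟩ := exists_perm_le_of_card_le d (fun j => d' j - q) fun g => by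
    simpa only [sub_le_iff_le_add] using hM.card_le_card_of_injective hN (φ g) (hφinj g)
  exact ⟨d' ∘ σ, fun i => β' (σ i), hN.reindex σ, fun i => sub_le_iff_le_add.1 (hσ i)⟩
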